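/- arXiv:2102.04746 — 2 statements merged into one kernel-verified Lean document; each statement's English description precedes it below -/
import Mathlib

section
/- Let E be a real Hilbert space, let G be a real normed space, and let ι : E → G be a compact continuous linear operator. Let Φ : E → (E →L E) be a map assigning to each w ∈ E a continuous linear operator Φ(w) on E, such that: (i) ⟨Φ(w) v, v⟩ ≥ 0 for all w, v ∈ E; (ii) for every a > 0 there exists L ≥ 0 such that for all w₁, w₂ ∈ E with ‖w₁‖ ≤ a and ‖w₂‖ ≤ a one has ‖Φ(w₁) − Φ(w₂)‖ ≤ L · ‖ι(w₁ − w₂)‖; and (iii) the map u ↦ Φ(u)u is monotone, i.e. ⟨Φ(u)u − Φ(v)v, u − v⟩ ≥ 0 for all u, v ∈ E. Then for every F ∈ E there exists a unique n ∈ E solving n + Φ(n) n = F, and it satisfies ‖n‖ ≤ ‖F‖. -/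
open scoped RealInnerProductSpace

set_option maxHeartbeats 1000000 in
/-- Well-posedness of the abstract nonlinear time-discrete problem: with a compact embedding
`ι : E → G`, a nonnegative, locally `ι`-Lipschitz operator-valued map `Φ` such that
`u ↦ Φ(u) u` is monotone, for every `F` the equation `n + Φ(n) n = F` has a unique solution,
which satisfies `‖n‖ ≤ ‖F‖`. -/
theorem nonlinear_well_posedness
    {E G : Type*} [NormedAddCommGroup E] [InnerProductSpace ℝ E] [CompleteSpace E]
    [NormedAddCommGroup G] [NormedSpace ℝ G]
    (ι : E →L[ℝ] G) (hι : IsCompactOperator ι)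
    (Φ : E → (E →L[ℝ] E))
    (hpos : ∀ w v : E, 0 ≤ ⟪Φ w v, v⟫)
    (hlip : ∀ a : ℝ, 0 < a → ∃ L : ℝ, 0 ≤ L ∧ ∀ w₁ w₂ : E, ‖w₁‖ ≤ a → ‖w₂‖ ≤ a →
      ‖Φ w₁ - Φ w₂‖ ≤ L * ‖ι (w₁ - w₂)‖)
    (hmono : ∀ u v : E, 0 ≤ ⟪Φ u u - Φ v v, u - v⟫)
    (F : E) :
    (∃! n : E, n + Φ n n = F) ∧ (∀ n : E, n + Φ n n = F → ‖n‖ ≤ ‖F‖) := by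
  -- the energy bound
  have hbound : ∀ n : E, n + Φ n n = F → ‖n‖ ≤ ‖F‖ := by
    intro n hn
    have h1 : ‖n‖ ^ 2 ≤ ⟪F, n⟫ := by
      have : ⟪F, n⟫ = ⟪n, n⟫ + ⟪Φ n n, n⟫ := by
        rw [← hn, inner_add_left]
      rw [this, real_inner_self_eq_norm_sq]
      nlinarith [hpos n n]
    have h2 : ⟪F, n⟫ ≤ ‖F‖ * ‖n‖ := real_inner_le_norm F n
    nlinarith [norm_nonneg n, norm_nonneg F]
  -- uniqueness
  have huniq : ∀ n₁ n₂ : E, n₁ + Φ n₁ n₁ = F → n₂ + Φ n₂ n₂ = F → n₁ = n₂ := by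
    intro n₁ n₂ h1 h2
    have hd : (n₁ - n₂) + (Φ n₁ n₁ - Φ n₂ n₂) = 0 := by
      rw [← h1] at h2
      linear_combination (norm := abel1) -h2
    have : ⟪(n₁ - n₂) + (Φ n₁ n₁ - Φ n₂ n₂), n₁ - n₂⟫ = 0 := by
      rw [hd, inner_zero_left]
    rw [inner_add_left, real_inner_self_eq_norm_sq] at this
    have h0 : ‖n₁ - n₂‖ ^ 2 ≤ 0 := by nlinarith [hmono n₁ n₂]
    have : n₁ - n₂ = 0 := by
      have := norm_nonneg (n₁ - n₂)
      have : ‖n₁ - n₂‖ = 0 := by nlinarith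
      exact norm_eq_zero.mp this
    exact sub_eq_zero.mp this
  -- existence via Banach fixed point on a closed ball
  set a : ℝ := 2 * ‖F‖ + 1 with ha_def
  have ha : 0 < a := by positivity
  obtain ⟨L, hL0, hL⟩ := hlip a ha
  set C : ℝ := ‖Φ 0‖ + L * ‖ι‖ * a with hC_def
  have hC0 : 0 ≤ C := by positivity
  -- uniform bound on Φ on the ball
  have hΦbd : ∀ u : E, ‖u‖ ≤ a → ‖Φ u‖ ≤ C := by
    intro u hu
    have h1 : ‖Φ u - Φ 0‖ ≤ L * ‖ι (u - 0)‖ := hL u 0 hu (by simpa using ha.le)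
    have h2 : ‖ι (u - 0)‖ ≤ ‖ι‖ * ‖u‖ := by simpa using ι.le_opNorm (u - 0)
    have h3 : ‖Φ u‖ ≤ ‖Φ u - Φ 0‖ + ‖Φ 0‖ := by
      simpa using norm_sub_le_norm_sub_add_norm_sub (Φ u) (Φ 0) 0
    have h4 : L * ‖ι (u - 0)‖ ≤ L * (‖ι‖ * a) := by
      apply mul_le_mul_of_nonneg_left _ hL0
      exact h2.trans (mul_le_mul_of_nonneg_left hu (norm_nonneg _))
    rw [hC_def]; nlinarith
  set M : ℝ := 1 + C + L * ‖ι‖ * a with hM_def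
  have hLa : 0 ≤ L * ‖ι‖ * a := by positivity
  have hM1 : 1 ≤ M := by rw [hM_def]; linarith
  have hM0 : 0 < M := by linarith
  -- Lipschitz bound for T u = u + Φ u u on the ball
  have hTlip : ∀ u v : E, ‖u‖ ≤ a → ‖v‖ ≤ a →
      ‖(u + Φ u u) - (v + Φ v v)‖ ≤ M * ‖u - v‖ := by
    intro u v hu hv
    have e1 : (u + Φ u u) - (v + Φ v v) = (u - v) + Φ u (u - v) + (Φ u - Φ v) v := by
      simp [map_sub, ContinuousLinearMap.sub_apply]
      abel
    have h1 : ‖Φ u (u - v)‖ ≤ C * ‖u - v‖ :=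
      ((Φ u).le_opNorm _).trans (mul_le_mul_of_nonneg_right (hΦbd u hu) (norm_nonneg _))
    have h2 : ‖(Φ u - Φ v) v‖ ≤ (L * ‖ι (u - v)‖) * ‖v‖ :=
      ((Φ u - Φ v).le_opNorm v).trans (mul_le_mul_of_nonneg_right (hL u v hu hv) (norm_nonneg _))
    have h3 : ‖ι (u - v)‖ ≤ ‖ι‖ * ‖u - v‖ := ι.le_opNorm _
    have h4 : (L * ‖ι (u - v)‖) * ‖v‖ ≤ L * ‖ι‖ * a * ‖u - v‖ := by
      calc (L * ‖ι (u - v)‖) * ‖v‖ ≤ L * (‖ι‖ * ‖u - v‖) * a := by gcongr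
        _ = L * ‖ι‖ * a * ‖u - v‖ := by ring
    calc ‖(u + Φ u u) - (v + Φ v v)‖
        ≤ ‖(u - v) + Φ u (u - v)‖ + ‖(Φ u - Φ v) v‖ := by rw [e1]; exact norm_add_le _ _
      _ ≤ (‖u - v‖ + ‖Φ u (u - v)‖) + ‖(Φ u - Φ v) v‖ := by
            gcongr; exact norm_add_le _ _
      _ ≤ M * ‖u - v‖ := by rw [hM_def]; nlinarith
  set ρ : ℝ := (M ^ 2)⁻¹ with hρ_def
  have hρ0 : 0 < ρ := by positivity
  have hρ1 : ρ ≤ 1 := by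
    rw [hρ_def]
    rw [inv_le_one_iff₀]
    right; nlinarith
  set k : ℝ := Real.sqrt (1 - ρ) with hk_def
  have hk0 : 0 ≤ k := Real.sqrt_nonneg _
  have hk1 : k < 1 := by
    rw [hk_def]
    have : (1:ℝ) = Real.sqrt 1 := by simp
    rw [this]
    exact Real.sqrt_lt_sqrt (by linarith) (by linarith)
  have hksq : k ^ 2 = 1 - ρ := Real.sq_sqrt (by linarith)
  have hkhalf : k ≤ 1 - ρ / 2 := by
    nlinarith [Real.sqrt_nonneg (1 - ρ), Real.sq_sqrt (show (0:ℝ) ≤ 1 - ρ by linarith)]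
  -- the fixed point map
  set S : E → E := fun u => u - ρ • (u + Φ u u - F) with hS_def
  -- contraction estimate
  have hcontr : ∀ u v : E, ‖u‖ ≤ a → ‖v‖ ≤ a → ‖S u - S v‖ ≤ k * ‖u - v‖ := by
    intro u v hu hv
    have e1 : S u - S v = (u - v) - ρ • ((u + Φ u u) - (v + Φ v v)) := by
      rw [hS_def]; simp only [smul_sub]; abel
    set x := u - v
    set y := (u + Φ u u) - (v + Φ v v)
    have hTy : ‖y‖ ≤ M * ‖x‖ := hTlip u v hu hv
    have hy : y = x + ((Φ u) u - (Φ v) v) := by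
      show u + (Φ u) u - (v + (Φ v) v) = (u - v) + ((Φ u) u - (Φ v) v)
      abel
    have hmonoxy : ‖x‖ ^ 2 ≤ ⟪x, y⟫ := by
      rw [hy, inner_add_right, real_inner_self_eq_norm_sq]
      have h1 := hmono u v
      have h2 := real_inner_comm x ((Φ u) u - (Φ v) v)
      linarith
    have hρM : ρ * M ^ 2 = 1 := inv_mul_cancel₀ (by positivity)
    have hnsq : ‖S u - S v‖ ^ 2 ≤ (1 - ρ) * ‖x‖ ^ 2 := by
      rw [e1, norm_sub_sq_real, real_inner_smul_right, norm_smul, Real.norm_eq_abs,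
        abs_of_pos hρ0, mul_pow]
      have hy2 : ‖y‖ ^ 2 ≤ M ^ 2 * ‖x‖ ^ 2 := by
        nlinarith [mul_le_mul hTy hTy (norm_nonneg y) (mul_nonneg hM0.le (norm_nonneg x))]
      have h5 : ρ ^ 2 * ‖y‖ ^ 2 ≤ ρ * ‖x‖ ^ 2 := by
        calc ρ ^ 2 * ‖y‖ ^ 2 ≤ ρ ^ 2 * (M ^ 2 * ‖x‖ ^ 2) :=
              mul_le_mul_of_nonneg_left hy2 (sq_nonneg ρ)
          _ = (ρ * M ^ 2) * (ρ * ‖x‖ ^ 2) := by ring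
          _ = ρ * ‖x‖ ^ 2 := by rw [hρM]; ring
      nlinarith [mul_le_mul_of_nonneg_left hmonoxy hρ0.le, h5]
    have h' : ‖S u - S v‖ ^ 2 ≤ (k * ‖x‖) ^ 2 := by
      rw [mul_pow, hksq]; linarith [hnsq]
    exact (pow_le_pow_iff_left₀ (norm_nonneg _)
      (mul_nonneg hk0 (norm_nonneg _)) two_ne_zero).mp h'
  -- S maps the ball into itself
  have hS0 : S 0 = ρ • F := by simp [hS_def]
  have hself : ∀ u : E, ‖u‖ ≤ a → ‖S u‖ ≤ a := by
    intro u hu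
    have h1 : ‖S u - S 0‖ ≤ k * ‖u - 0‖ := hcontr u 0 hu (by simpa using ha.le)
    rw [sub_zero] at h1
    have h2 : ‖S u‖ ≤ ‖S u - S 0‖ + ‖S 0‖ := by
      calc ‖S u‖ = ‖(S u - S 0) + S 0‖ := by rw [sub_add_cancel]
        _ ≤ ‖S u - S 0‖ + ‖S 0‖ := norm_add_le _ _
    have h3 : ‖S 0‖ = ρ * ‖F‖ := by
      rw [hS0, norm_smul, Real.norm_eq_abs, abs_of_pos hρ0]
    have hF : ‖F‖ ≤ a / 2 := by rw [ha_def]; linarith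
    have hk' : k * ‖u‖ ≤ (1 - ρ / 2) * a :=
      mul_le_mul hkhalf hu (norm_nonneg u) (by linarith)
    have hρF : ρ * ‖F‖ ≤ ρ * (a / 2) := mul_le_mul_of_nonneg_left hF hρ0.le
    nlinarith
  -- Banach fixed point on the closed ball
  haveI : CompleteSpace (Metric.closedBall (0:E) a) :=
    Metric.isClosed_closedBall.completeSpace_coe
  haveI : Nonempty (Metric.closedBall (0:E) a) :=
    ⟨⟨0, Metric.mem_closedBall_self ha.le⟩⟩
  have hmem : ∀ x : Metric.closedBall (0:E) a, ‖(x:E)‖ ≤ a := by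
    intro x
    have := x.2
    rwa [Metric.mem_closedBall, dist_zero_right] at this
  set f : Metric.closedBall (0:E) a → Metric.closedBall (0:E) a :=
    fun x => ⟨S x, by
      rw [Metric.mem_closedBall, dist_zero_right]
      exact hself x (hmem x)⟩ with hf_def
  have hf : ContractingWith ⟨k, hk0⟩ f := by
    refine ⟨by exact_mod_cast hk1, LipschitzWith.of_dist_le_mul fun x y => ?_⟩
    have : dist (f x) (f y) = ‖S x - S y‖ := by
      rw [Subtype.dist_eq, dist_eq_norm]
    rw [this, Subtype.dist_eq, dist_eq_norm]
    exact hcontr x y (hmem x) (hmem y)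
  set n : Metric.closedBall (0:E) a := hf.fixedPoint f with hn_def
  have hfix : f n = n := hf.fixedPoint_isFixedPt
  have hSn : S (n:E) = (n:E) := congrArg Subtype.val hfix
  have heq : (n:E) + Φ (n:E) (n:E) = F := by
    have h0 : ρ • ((n:E) + Φ (n:E) (n:E) - F) = 0 := by
      have h := hSn
      simp only [hS_def] at h
      exact sub_eq_self.mp h
    rcases smul_eq_zero.mp h0 with h | h
    · exact absurd h hρ0.ne'
    · exact sub_eq_zero.mp h
  exact ⟨⟨(n:E), heq, fun y hy => huniq y (n:E) hy heq⟩, hbound⟩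
end

section
/- Let d ≥ 1, τ > 0, and a ∈ ℝᵈ. Let f, q : ℝᵈ → ℝ be continuous functions and let w : ℝᵈ → ℝᵈ be a differentiable vector field whose divergence ∇·w is continuous and such that the residual 𝐫 := f − q − τ ∇·w is continuous. Define the remainder flux σ_rem : ℝᵈ → ℝᵈ componentwise by (σ_rem)ⱼ(x) := (1/(dτ)) · ∫_{a_j}^{x_j} 𝐫(x₁, …, x_{j−1}, ζ, x_{j+1}, …, x_d) dζ, and set σ := w + σ_rem. Then σ is divergence-free up to the data, in the strong pointwise sense: q(x) + τ (∇·σ)(x) = f(x) for every x ∈ ℝᵈ. -/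
open Function

/-- Abstract pointwise flux equilibration (Proposition 5.1): with data `f`, lower-order
terms `q`, a differentiable flux `w` with continuous divergence, continuous residual
`𝐫 = f − q − τ ∇·w`, and remainder flux built coordinatewise from line integrals of `𝐫`,
the total flux `σ = w + σ_rem` satisfies `q(x) + τ (∇·σ)(x) = f(x)` for every `x`. -/
theorem flux_equilibration_pointwise
    (d : ℕ) (hd : 1 ≤ d) (τ : ℝ) (hτ : 0 < τ) (a : Fin d → ℝ)
    (f q : (Fin d → ℝ) → ℝ) (hf : Continuous f) (hq : Continuous q)
    (w : (Fin d → ℝ) → Fin d → ℝ) (hw : Differentiable ℝ w)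
    (divw : (Fin d → ℝ) → ℝ)
    (hdivw : ∀ x : Fin d → ℝ, divw x = ∑ j : Fin d, fderiv ℝ w x (Pi.single j 1) j)
    (hdivw_cont : Continuous divw)
    (rres : (Fin d → ℝ) → ℝ)
    (hrres : ∀ x : Fin d → ℝ, rres x = f x - q x - τ * divw x)
    (hrres_cont : Continuous rres)
    (σrem : (Fin d → ℝ) → Fin d → ℝ)
    (hσrem : ∀ (x : Fin d → ℝ) (j : Fin d),
      σrem x j = (1 / ((d : ℝ) * τ)) * ∫ ζ in (a j)..(x j), rres (Function.update x j ζ))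
    (σ : (Fin d → ℝ) → Fin d → ℝ) (hσ : ∀ x, σ x = w x + σrem x) :
    ∀ x : Fin d → ℝ,
      (∀ j : Fin d, DifferentiableAt ℝ (fun t => σ (Function.update x j t) j) (x j)) ∧
      q x + τ * ∑ j : Fin d, deriv (fun t => σ (Function.update x j t) j) (x j) = f x := by
  intro x
  -- key: derivative of each component
  have key : ∀ j : Fin d, HasDerivAt (fun t => σ (Function.update x j t) j)
      (fderiv ℝ w x (Pi.single j 1) j + (1 / ((d : ℝ) * τ)) * rres x) (x j) := by
    intro j
    have hrw : ∀ t : ℝ, σ (Function.update x j t) j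
        = w (Function.update x j t) j
          + (1 / ((d : ℝ) * τ)) * ∫ ζ in (a j)..t, rres (Function.update x j ζ) := by
      intro t
      rw [hσ, Pi.add_apply, hσrem]
      simp [Function.update_idem]
    -- derivative of the w part
    have h1 : HasDerivAt (fun t => w (Function.update x j t) j)
        (fderiv ℝ w x (Pi.single j 1) j) (x j) := by
      have hcomp : HasDerivAt (fun t => w (Function.update x j t))
          (fderiv ℝ w x (Pi.single j 1)) (x j) := by
        have hu := hasDerivAt_update x j (x j)
        have hwx : HasFDerivAt w (fderiv ℝ w x) (Function.update x j (x j)) := by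
          rw [Function.update_eq_self]; exact (hw x).hasFDerivAt
        exact hwx.comp_hasDerivAt (x j) hu
      exact (hasDerivAt_pi.1 hcomp) j
    -- derivative of the integral part (FTC)
    have hgc : Continuous (fun ζ : ℝ => rres (Function.update x j ζ)) :=
      hrres_cont.comp (continuous_const.update j continuous_id)
    have h2 : HasDerivAt (fun t => ∫ ζ in (a j)..t, rres (Function.update x j ζ))
        (rres x) (x j) := by
      have := (hgc.integral_hasStrictDerivAt (a j) (x j)).hasDerivAt
      simpa [Function.update_eq_self] using this
    have := h1.add (h2.const_mul (1 / ((d : ℝ) * τ)))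
    exact (this.congr_of_eventuallyEq (Filter.Eventually.of_forall hrw))
  refine ⟨fun j => (key j).differentiableAt, ?_⟩
  have hders : ∀ j : Fin d, deriv (fun t => σ (Function.update x j t) j) (x j)
      = fderiv ℝ w x (Pi.single j 1) j + (1 / ((d : ℝ) * τ)) * rres x :=
    fun j => (key j).deriv
  have hsum : (∑ j : Fin d, deriv (fun t => σ (Function.update x j t) j) (x j))
      = divw x + (d : ℝ) * ((1 / ((d : ℝ) * τ)) * rres x) := by
    simp only [hders, Finset.sum_add_distrib, Finset.sum_const, Finset.card_univ,
      Fintype.card_fin, nsmul_eq_mul, hdivw]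
  have hdne : (d : ℝ) ≠ 0 := Nat.cast_ne_zero.2 (by omega)
  have hτne : τ ≠ 0 := ne_of_gt hτ
  rw [hsum, hrres x]
  field_simp
  ring
end
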